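/- For every nonnegative integer n and real x with 0 < x < 1, Bₙ(x) := ∑_{j=0}^∞ binom(n+j, j) ((−1)^j (1/2)_j / ((2(n+j)+3) j!)) x^j equals (1/(2 x^{n+3/2})) ∫₀^x (t^{n+1/2}/√(1+t)) · ₂F₁(−n, 1/2; 1; t/(1+t)) dt. -/

import Mathlib

/-!
Write `(-1)^j (1/2)_j / j! = C(-1/2, j)` and `(-n)_k / k! = (-1)^k C(n, k)`. The integrand is then
`t^(n+1/2)` times `(1+t)^(-1/2) ₂F₁(-n, 1/2; 1; t/(1+t))`, which by Pfaff's transformation is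
`₂F₁(n+1, 1/2; 1; -t) = ∑ C(n+j, j) C(-1/2, j) t^j`. Pfaff's transformation comes from expanding each
`(1+t)^(-1/2-k)` in its binomial series, using `C(a, k) C(a-k, j-k) = C(j, k) C(a, j)` and
Vandermonde's `∑ₖ C(n, k) C(j, k) = C(n+j, j)`. Integrating termwise over `[0, x]` (dominated
convergence, since `x < 1`) turns `t^(n+1/2+j)` into `x^(n+3/2+j) / (n+3/2+j)`.
-/

open scoped Nat

/-- Pochhammer symbol `(a)_j` for real `a`. -/
noncomputable def poch (a : ℝ) (j : ℕ) : ℝ := (ascPochhammer ℝ j).eval a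

/-- The terminating hypergeometric polynomial `₂F₁(-n, 1/2; 1; y)`. -/
noncomputable def F (n : ℕ) (y : ℝ) : ℝ :=
  ∑ j ∈ Finset.range (n + 1),
    poch (-(n : ℝ)) j * poch (1/2) j / ((j ! : ℝ) ^ 2) * y ^ j

open Finset

lemma ringChoose_neg_eq_poch (a : ℝ) (k : ℕ) :
    Ring.choose (-a) k = (-1) ^ k * poch a k / k ! := by
  have hk : (k ! : ℝ) ≠ 0 := by positivity
  rw [eq_div_iff hk, Ring.choose_neg', mul_comm, ← nsmul_eq_mul, smul_comm,
    Ring.factorial_nsmul_multichoose_eq_ascPochhammer, Polynomial.ascPochhammer_smeval_eq_eval]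
  simp [poch, Int.negOnePow, Units.smul_def]

lemma poch_neg_natCast (n k : ℕ) : poch (-n) k = (-1) ^ k * k ! * n.choose k := by
  rw [poch, ascPochhammer_eval_neg_eq_descPochhammer, descPochhammer_eval_eq_descFactorial,
    Nat.descFactorial_eq_factorial_mul_choose]
  push_cast
  ring

lemma poch_nonneg_le_factorial {a : ℝ} (h0 : 0 ≤ a) (h1 : a ≤ 1) (k : ℕ) :
    0 ≤ poch a k ∧ poch a k ≤ k ! := by
  induction k with
  | zero => simp [poch]
  | succ k ih =>
    obtain ⟨hp0, hp1⟩ := ih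
    rw [poch, ascPochhammer_succ_eval, ← poch, Nat.factorial_succ, Nat.cast_mul,
      mul_comm ((k + 1 : ℕ) : ℝ)]
    push_cast
    exact ⟨by positivity, mul_le_mul hp1 (by linarith) (by positivity) (by positivity)⟩

lemma abs_ringChoose_neg_le_one {a : ℝ} (h0 : 0 ≤ a) (h1 : a ≤ 1) (k : ℕ) :
    |Ring.choose (-a) k| ≤ 1 := by
  obtain ⟨hp0, hp1⟩ := poch_nonneg_le_factorial h0 h1 k
  rw [ringChoose_neg_eq_poch, abs_div, abs_mul, abs_pow, abs_neg, abs_one, one_pow, one_mul,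
    abs_of_nonneg hp0, Nat.abs_cast]
  exact div_le_one_of_le₀ hp1 (by positivity)

lemma F_eq_sum_choose (n : ℕ) (y : ℝ) :
    F n y = ∑ k ∈ range (n + 1), n.choose k * Ring.choose (-(1 / 2) : ℝ) k * y ^ k := by
  refine sum_congr rfl fun k _ ↦ ?_
  rw [poch_neg_natCast, ringChoose_neg_eq_poch]
  field_simp

lemma summable_abs_add_choose_mul_ringChoose_neg_mul_pow (n : ℕ) {a x : ℝ} (ha0 : 0 ≤ a)
    (ha1 : a ≤ 1) (hx0 : 0 ≤ x) (hx1 : x < 1) :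
    Summable fun j ↦ |((n + j).choose j : ℝ) * Ring.choose (-a) j| * x ^ j := by
  refine (summable_choose_mul_geometric_of_norm_lt_one n (r := x) ?_).of_nonneg_of_le
    (fun j ↦ by positivity) fun j ↦ ?_
  · rwa [Real.norm_of_nonneg hx0]
  · rw [abs_mul, Nat.abs_cast, add_comm j n, Nat.choose_symm_add]
    gcongr
    exact mul_le_of_le_one_right (by positivity) (abs_ringChoose_neg_le_one ha0 ha1 j)

lemma hasSum_ringChoose_mul_pow (a : ℝ) {t : ℝ} (ht : |t| < 1) :
    HasSum (fun m ↦ Ring.choose a m * t ^ m) ((1 + t) ^ a) := by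
  have := Real.one_add_rpow_hasFPowerSeriesOnBall_zero (a := a) |>.hasSum
    (y := t) (by simpa [← ofReal_norm, Real.norm_eq_abs] using ht)
  simpa [binomialSeries, FormalMultilinearSeries.ofScalars_apply_eq, smul_eq_mul, mul_comm]
    using this

lemma hasSum_choose_mul_ringChoose_mul_pow (a : ℝ) (k : ℕ) {t : ℝ} (ht : |t| < 1) :
    HasSum (fun j ↦ (j.choose k : ℝ) * Ring.choose a j * t ^ j)
      (Ring.choose a k * t ^ k * (1 + t) ^ (a - k)) := by
  rw [← hasSum_nat_add_iff' k]
  have hlow : ∑ j ∈ range k, (j.choose k : ℝ) * Ring.choose a j * t ^ j = 0 :=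
    sum_eq_zero fun j hj ↦ by simp [Nat.choose_eq_zero_of_lt (mem_range.mp hj)]
  rw [hlow, sub_zero]
  refine ((hasSum_ringChoose_mul_pow (a - k) ht).mul_left (Ring.choose a k * t ^ k)).congr_fun
    fun m ↦ ?_
  have h := Ring.choose_smul_choose a (Nat.le_add_left k m)
  rw [Nat.add_sub_cancel, nsmul_eq_mul] at h
  rw [pow_add, h]
  ring

lemma Nat.sum_range_choose_mul_choose (n j : ℕ) :
    ∑ k ∈ range (n + 1), n.choose k * j.choose k = (n + j).choose j := by
  rw [← Nat.choose_symm_add, Nat.add_choose_eq, Nat.sum_antidiagonal_eq_sum_range_succ_mk,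
    ← sum_range_reflect]
  refine sum_congr rfl fun k hk ↦ ?_
  simp only [add_tsub_cancel_right, Nat.choose_symm (Nat.lt_succ_iff.mp (mem_range.mp hk))]

lemma hasSum_add_choose_mul_ringChoose_mul_pow (a : ℝ) (n : ℕ) {t : ℝ} (ht : |t| < 1) :
    HasSum (fun j ↦ ((n + j).choose j : ℝ) * Ring.choose a j * t ^ j)
      ((1 + t) ^ a * ∑ k ∈ range (n + 1), n.choose k * Ring.choose a k * (t / (1 + t)) ^ k) := by
  have ht1 : 0 < 1 + t := by linarith [neg_abs_le t]
  have hk : ∀ k ∈ range (n + 1), HasSum (fun j ↦ n.choose k * ((j.choose k : ℝ) *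
      Ring.choose a j * t ^ j)) (n.choose k * (Ring.choose a k * t ^ k * (1 + t) ^ (a - k))) :=
    fun k _ ↦ (hasSum_choose_mul_ringChoose_mul_pow a k ht).mul_left _
  convert hasSum_sum hk using 1
  · funext j
    rw [← Nat.sum_range_choose_mul_choose, Nat.cast_sum, sum_mul, sum_mul]
    refine sum_congr rfl fun k _ ↦ ?_
    push_cast
    ring
  · rw [mul_sum]
    refine sum_congr rfl fun k _ ↦ ?_
    rw [Real.rpow_sub ht1, Real.rpow_natCast, div_pow]
    field_simp

lemma hasSum_intervalIntegral_rpow_mul {c : ℕ → ℝ} {g : ℝ → ℝ} {s x : ℝ} (hs : -1 < s)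
    (hx : 0 ≤ x) (hc : Summable fun j ↦ |c j| * x ^ j)
    (hg : ∀ t ∈ Set.Ioc 0 x, HasSum (fun j ↦ c j * t ^ j) (g t)) :
    HasSum (fun j ↦ c j * (x ^ (s + j + 1) / (s + j + 1))) (∫ t in 0..x, t ^ s * g t) := by
  have hj : ∀ j : ℕ, -1 < s + j := fun j ↦ by linarith [(j.cast_nonneg : (0 : ℝ) ≤ j)]
  have hterm : ∀ j : ℕ, ∫ t in 0..x, c j * t ^ (s + j) = c j * (x ^ (s + j + 1) / (s + j + 1)) :=
    fun j ↦ by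
      rw [intervalIntegral.integral_const_mul, integral_rpow (Or.inl (hj j)),
        Real.zero_rpow (by linarith [hj j]), sub_zero]
  simp only [← hterm]
  refine intervalIntegral.hasSum_integral_of_dominated_convergence
    (fun j t ↦ |c j| * x ^ j * t ^ s) (fun j ↦ ?_) (fun j ↦ ?_) ?_ ?_ ?_
  · exact ((measurable_id.pow_const _).const_mul _).aestronglyMeasurable
  · refine Filter.Eventually.of_forall fun t ht ↦ ?_
    rw [Set.uIoc_of_le hx] at ht
    rw [norm_mul, Real.norm_eq_abs, Real.norm_of_nonneg (Real.rpow_nonneg ht.1.le _),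
      Real.rpow_add ht.1, Real.rpow_natCast, mul_assoc, mul_comm (t ^ s)]
    have := Real.rpow_nonneg ht.1.le s
    gcongr
    exacts [ht.1.le, ht.2]
  · exact Filter.Eventually.of_forall fun t _ ↦ hc.mul_right _
  · simp only [tsum_mul_right]
    exact (intervalIntegral.intervalIntegrable_rpow' hs).const_mul _
  · refine Filter.Eventually.of_forall fun t ht ↦ ?_
    rw [Set.uIoc_of_le hx] at ht
    refine ((hg t ht).mul_left (t ^ s)).congr_fun fun j ↦ ?_
    rw [Real.rpow_add ht.1, Real.rpow_natCast]
    ring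

theorem B_integral_rep (n : ℕ) (x : ℝ) (hx : x ∈ Set.Ioo (0:ℝ) 1) :
    (∑' j : ℕ, ((n + j).choose j : ℝ) * ((-1) ^ j * poch (1/2) j /
        ((2 * ((n : ℝ) + j) + 3) * (j ! : ℝ))) * x ^ j) =
      1 / (2 * x ^ ((n : ℝ) + 3/2)) *
        ∫ t in (0:ℝ)..x, t ^ ((n : ℝ) + 1/2) / Real.sqrt (1 + t) * F n (t / (1 + t)) := by
  obtain ⟨hx0, hx1⟩ := hx
  set c : ℕ → ℝ := fun j ↦ ((n + j).choose j : ℝ) * Ring.choose (-(1 / 2) : ℝ) j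
  have hc : Summable fun j ↦ |c j| * x ^ j :=
    summable_abs_add_choose_mul_ringChoose_neg_mul_pow n (by norm_num) (by norm_num) hx0.le hx1
  have hg : ∀ t ∈ Set.Ioc 0 x, HasSum (fun j ↦ c j * t ^ j) (F n (t / (1 + t)) / √(1 + t)) := by
    intro t ht
    have ht1 : 0 ≤ 1 + t := by linarith [ht.1]
    convert hasSum_add_choose_mul_ringChoose_mul_pow (-(1 / 2)) n
      (abs_lt.2 ⟨by linarith [ht.1], by linarith [ht.2]⟩) using 1
    rw [← F_eq_sum_choose, Real.rpow_neg ht1, ← Real.sqrt_eq_rpow, div_eq_inv_mul]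
  have hI := hasSum_intervalIntegral_rpow_mul (s := n + 1 / 2)
    (by linarith [(n.cast_nonneg : (0 : ℝ) ≤ n)]) hx0.le hc hg
  rw [show (fun t ↦ t ^ ((n : ℝ) + 1/2) / √(1 + t) * F n (t / (1 + t))) =
      fun t ↦ t ^ ((n : ℝ) + 1/2) * (F n (t / (1 + t)) / √(1 + t)) by funext t; ring,
    ← hI.tsum_eq, ← tsum_mul_left]
  refine tsum_congr fun j ↦ ?_
  have hsplit : x ^ ((n : ℝ) + 1 / 2 + j + 1) = x ^ ((n : ℝ) + 3 / 2) * x ^ j := by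
    rw [← Real.rpow_natCast, ← Real.rpow_add hx0]
    ring_nf
  simp only [c, ringChoose_neg_eq_poch, hsplit]
  field_simp
  ring
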